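/- Let θ satisfy θ(1) ≥ 2, θ(n) ≥ P⁺(n) for n ≥ 2, and suppose θ(2^r n) ≥ 2^r · θ'(n) for some fixed r and all n, where θ'(n) = 2n. Then if n ∈ 𝔅_{θ'}, we have 2^r n ∈ 𝔅_θ; consequently B_θ(x) ≥ B_{θ'}(x/2^r). -/

import Mathlib

open scoped Classical ENNReal

noncomputable section

/-- Largest prime factor of `n` (0 for `n = 1`). -/
def maxPrimeFac (n : ℕ) : ℕ := n.primeFactors.sup id

/-- Validity conditions (3) on `θ`: `θ(1) ≥ 2` and `θ(n) ≥ P⁺(n)` for `n ≥ 2`. -/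
def ThetaOK (θ : ℕ → ℝ≥0∞) : Prop :=
  2 ≤ θ 1 ∧ ∀ n, 2 ≤ n → (maxPrimeFac n : ℝ≥0∞) ≤ θ n

/-- Membership in `𝔅`: `n ≥ 1` and each prime `p` of `n` satisfies
`p ≤ θ(prefix of the factorization of n below p)`. -/
def Bmem (θ : ℕ → ℝ≥0∞) (n : ℕ) : Prop :=
  0 < n ∧ ∀ p ∈ n.primeFactors,
    (p : ℝ≥0∞) ≤ θ (∏ q ∈ n.primeFactors.filter (fun q => q < p), q ^ (n.factorization q))

/-- Membership in `𝔇`: `n ≥ 1` and each divisor `d < n` of `n` is followed by a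
divisor `e` of `n` with `d < e ≤ θ(d)`. -/
def Dmem (θ : ℕ → ℝ≥0∞) (n : ℕ) : Prop :=
  0 < n ∧ ∀ d, d ∣ n → d < n → ∃ e, e ∣ n ∧ d < e ∧ (e : ℝ≥0∞) ≤ θ d

noncomputable def Bcount (θ : ℕ → ℝ≥0∞) (x : ℝ) : ℕ :=
  ((Finset.Icc 1 ⌊x⌋₊).filter (fun n => Bmem θ n)).card

/-!
For an odd prime `p`, the part of `2^r n` built from primes below `p` is `2^r` times that of `n`,
so the condition `p ≤ 2 · (prefix of n)` for `n ∈ 𝔅_{θ'}` becomes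
`p ≤ 2^r · 2 · (prefix of n) ≤ θ(prefix of 2^r n)`; for `p = 2` the prefix is `1` and `θ(1) ≥ 2`.
Multiplication by `2^r` then maps `𝔅_{θ'} ∩ [1, x/2^r]` injectively into `𝔅_θ ∩ [1, x]`.
-/

/-- Only primes strictly below `p` count, unlike the usual convention for `p`-smooth numbers. -/
def smoothPart (n p : ℕ) : ℕ :=
  ∏ q ∈ n.primeFactors.filter (fun q => q < p), q ^ (n.factorization q)

namespace smoothPart

theorem eq_prod_range (n p : ℕ) :
    smoothPart n p = ∏ q ∈ Finset.range p, q ^ (n.factorization q) := by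
  refine Finset.prod_subset (fun q hq => Finset.mem_range.mpr (Finset.mem_filter.mp hq).2) ?_
  intro q hq hq'
  have : n.factorization q = 0 := by
    by_contra h
    exact hq' (Finset.mem_filter.mpr
      ⟨Nat.support_factorization n ▸ Finsupp.mem_support_iff.mpr h, Finset.mem_range.mp hq⟩)
  simp [this]

theorem mul {a b : ℕ} (ha : a ≠ 0) (hb : b ≠ 0) (p : ℕ) :
    smoothPart (a * b) p = smoothPart a p * smoothPart b p := by
  simp only [eq_prod_range, Nat.factorization_mul ha hb, Finsupp.add_apply, pow_add,
    Finset.prod_mul_distrib]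

theorem two_pow {p : ℕ} (hp : 2 < p) (r : ℕ) : smoothPart (2 ^ r) p = 2 ^ r := by
  rw [eq_prod_range, Finset.prod_eq_single_of_mem 2 (Finset.mem_range.mpr hp)]
  · simp [Nat.prime_two.factorization_pow]
  · intro q _ hq
    simp [Nat.prime_two.factorization_pow, Ne.symm hq]

theorem of_le_two (n : ℕ) {p : ℕ} (hp : p ≤ 2) : smoothPart n p = 1 := by
  refine Finset.prod_eq_one fun q hq => ?_
  have := (Nat.prime_of_mem_primeFactors (Finset.mem_filter.mp hq).1).two_le
  have := (Finset.mem_filter.mp hq).2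
  omega

theorem pos (n p : ℕ) : 0 < smoothPart n p :=
  Finset.prod_pos fun _ hq =>
    pow_pos (Nat.prime_of_mem_primeFactors (Finset.mem_filter.mp hq).1).pos _

end smoothPart

theorem Bmem_iff (θ : ℕ → ℝ≥0∞) (n : ℕ) :
    Bmem θ n ↔ 0 < n ∧ ∀ p ∈ n.primeFactors, (p : ℝ≥0∞) ≤ θ (smoothPart n p) :=
  Iff.rfl

theorem mem_primeFactors_of_mem_two_pow_mul {r n p : ℕ} (hn : n ≠ 0)
    (hp : p ∈ (2 ^ r * n).primeFactors) (hp2 : p ≠ 2) : p ∈ n.primeFactors := by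
  rw [Nat.primeFactors_mul (pow_ne_zero r two_ne_zero) hn, Finset.mem_union] at hp
  refine hp.resolve_left fun h => hp2 ?_
  have hp_prime := Nat.prime_of_mem_primeFactors h
  exact (Nat.prime_dvd_prime_iff_eq hp_prime Nat.prime_two).mp
    (hp_prime.dvd_of_dvd_pow (Nat.dvd_of_mem_primeFactors h))

theorem Bmem_two_pow_mul (θ : ℕ → ℝ≥0∞) (hθ1 : 2 ≤ θ 1) (r : ℕ)
    (hr : ∀ n : ℕ, 1 ≤ n → ((2 ^ r : ℕ) : ℝ≥0∞) * (2 * n) ≤ θ (2 ^ r * n)) {n : ℕ}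
    (hn : Bmem (fun m => (2 * m : ℝ≥0∞)) n) : Bmem θ (2 ^ r * n) := by
  obtain ⟨hn_pos, hn_mem⟩ := (Bmem_iff _ _).mp hn
  refine (Bmem_iff _ _).mpr ⟨Nat.mul_pos (Nat.two_pow_pos r) hn_pos, fun p hp => ?_⟩
  have hp_prime := Nat.prime_of_mem_primeFactors hp
  rcases hp_prime.two_le.eq_or_lt with rfl | hp_odd
  · simpa [smoothPart.of_le_two _ le_rfl] using hθ1
  rw [smoothPart.mul (pow_ne_zero r two_ne_zero) hn_pos.ne', smoothPart.two_pow hp_odd]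
  calc (p : ℝ≥0∞)
      ≤ 2 * smoothPart n p :=
        hn_mem p (mem_primeFactors_of_mem_two_pow_mul hn_pos.ne' hp hp_odd.ne')
    _ ≤ ((2 ^ r : ℕ) : ℝ≥0∞) * (2 * smoothPart n p) :=
        le_mul_of_one_le_left' (by exact_mod_cast Nat.one_le_two_pow)
    _ ≤ θ (2 ^ r * smoothPart n p) := hr _ (smoothPart.pos n p)

theorem Bcount_div_le_of_mul_mem {θ θ' : ℕ → ℝ≥0∞} {k : ℕ} (hk : 0 < k)
    (h : ∀ n, Bmem θ' n → Bmem θ (k * n)) (x : ℝ) : Bcount θ' (x / k) ≤ Bcount θ x := by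
  refine Finset.card_le_card_of_injOn (k * ·) (fun n hn => ?_)
    fun a _ b _ hab => Nat.eq_of_mul_eq_mul_left hk hab
  simp only [Finset.coe_filter, Finset.mem_Icc, Set.mem_ofPred_eq, Nat.floor_div_natCast] at hn ⊢
  obtain ⟨⟨hn1, hnx⟩, hnB⟩ := hn
  refine ⟨⟨Nat.mul_pos hk hn1, ?_⟩, h n hnB⟩
  rw [mul_comm]
  exact (Nat.le_div_iff_mul_le hk).mp hnx

theorem stmt11 (θ : ℕ → ℝ≥0∞) (hθ : ThetaOK θ) (r : ℕ)
    (hr : ∀ n : ℕ, 1 ≤ n → ((2 ^ r : ℕ) : ℝ≥0∞) * (2 * n) ≤ θ (2 ^ r * n)) :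
    (∀ n, Bmem (fun m => (2 * m : ℝ≥0∞)) n → Bmem θ (2 ^ r * n)) ∧
      ∀ x : ℝ, Bcount (fun m => (2 * m : ℝ≥0∞)) (x / 2 ^ r) ≤ Bcount θ x := by
  have hmul : ∀ n, Bmem (fun m => (2 * m : ℝ≥0∞)) n → Bmem θ (2 ^ r * n) :=
    fun _ => Bmem_two_pow_mul θ hθ.1 r hr
  refine ⟨hmul, fun x => ?_⟩
  have := Bcount_div_le_of_mul_mem (Nat.two_pow_pos r) hmul x
  simpa using this
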